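/- arXiv:2303.14919 — 2 statements merged into one kernel-verified Lean document; each statement's English description precedes it below -/
import Mathlib

section
/- Let $F$ be a field of characteristic not $2$ and $V$ a finite-dimensional quadratic space over $F$ with nondegenerate symmetric bilinear form, and $W$ a nonzero finite-dimensional symplectic space over $F$. Then the image of $O(V)$ in $\mathrm{Sp}(V\otimes W)$ (acting by $g \otimes 1$) centralizes the image of $\mathrm{Sp}(W)$ (acting by $1 \otimes h$), and conversely any element of $\mathrm{Sp}(V\otimes W)$ commuting with all elements $1\otimes h$, $h \in \mathrm{Sp}(W)$, lies in the image of $\mathrm{GL}(V) \otimes 1$. -/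
open TensorProduct

section Aux

variable {F : Type*} [Field F] {W : Type*} [AddCommGroup W] [Module F W]

private lemma exists_both_ne_zero (f g : W →ₗ[F] F) (hf : ∃ x, f x ≠ 0) (hg : ∃ y, g y ≠ 0) :
    ∃ z, f z ≠ 0 ∧ g z ≠ 0 := by
  obtain ⟨x, hx⟩ := hf
  obtain ⟨y, hy⟩ := hg
  by_cases h1 : g x ≠ 0
  · exact ⟨x, hx, h1⟩
  by_cases h2 : f y ≠ 0
  · exact ⟨y, h2, hy⟩
  push_neg at h1 h2
  exact ⟨x + y, by simp [h2, hx], by simp [h1, hy]⟩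

/-- The rank-one operator `x ↦ B x a • b`. -/
private noncomputable def rk (BW : LinearMap.BilinForm F W) (a b : W) : W →ₗ[F] W :=
  (BW.flip a).smulRight b

@[simp] private lemma rk_apply (BW : LinearMap.BilinForm F W) (a b x : W) :
    rk BW a b x = BW x a • b := rfl

variable {V : Type*} [AddCommGroup V] [Module F V] [FiniteDimensional F W] [Nontrivial W]

/-- Main step: an invertible endomorphism of `V ⊗ W` commuting with `1 ⊗ Sp(W)` is of the
form `A₀ ⊗ 1` for a linear map `A₀`. -/
private lemma commutant_aux₀
    (BW : LinearMap.BilinForm F W) (hWalt : BW.IsAlt) (hWnd : BW.Nondegenerate)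
    (T : (V ⊗[F] W) ≃ₗ[F] (V ⊗[F] W))
    (hcomm : ∀ h : W ≃ₗ[F] W, (∀ w w', BW (h w) (h w') = BW w w') →
      T.trans (TensorProduct.congr (LinearEquiv.refl F V) h) =
        (TensorProduct.congr (LinearEquiv.refl F V) h).trans T) :
    ∃ A₀ : V →ₗ[F] V, ∀ (v : V) (w : W), T (v ⊗ₜ[F] w) = (A₀ v) ⊗ₜ[F] w := by
  have hskew : ∀ x y : W, BW x y = -BW y x := fun x y => (hWalt.neg_eq y x).symm
  -- nonzero vectors pair nontrivially with something (on either side)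
  have hexR : ∀ a : W, a ≠ 0 → ∃ y, BW a y ≠ 0 := by
    intro a ha
    by_contra h
    push_neg at h
    exact ha (hWnd.1 a h)
  have hexL : ∀ a : W, a ≠ 0 → ∃ y, BW y a ≠ 0 := by
    intro a ha
    obtain ⟨y, hy⟩ := hexR a ha
    exact ⟨y, by rw [hskew]; simpa using hy⟩
  -- the commuting property, pointwise
  set P : (W →ₗ[F] W) → Prop :=
    fun u => ∀ z, T (LinearMap.lTensor V u z) = LinearMap.lTensor V u (T z) with hP
  have hPzero : P 0 := by intro z; simp
  have hPadd : ∀ u u', P u → P u' → P (u + u') := by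
    intro u u' hu hu' z
    simp [LinearMap.lTensor_add, hu z, hu' z]
  have hPsmul : ∀ (c : F) u, P u → P (c • u) := by
    intro c u hu z
    simp [LinearMap.lTensor_smul, hu z]
  have hPcomp : ∀ u u', P u → P u' → P (u ∘ₗ u') := by
    intro u u' hu hu' z
    simp only [LinearMap.lTensor_comp, LinearMap.comp_apply, hu, hu']
    rw [hu (LinearMap.lTensor V u' z), hu' z]
  -- transvections give `P (rk BW w w)`
  have hPq : ∀ w : W, P (rk BW w w) := by
    intro w
    have hqq : ∀ x, rk BW w w (rk BW w w x) = 0 := by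
      intro x
      simp [hWalt w]
    have h1 : ((LinearMap.id + rk BW w w) ∘ₗ (LinearMap.id - rk BW w w)) = LinearMap.id := by
      apply LinearMap.ext
      intro x
      simp [map_sub, hqq, hWalt w]
    have h2 : ((LinearMap.id - rk BW w w) ∘ₗ (LinearMap.id + rk BW w w)) = LinearMap.id := by
      apply LinearMap.ext
      intro x
      simp [map_add, hqq, hWalt w]
    set h : W ≃ₗ[F] W := LinearEquiv.ofLinear (LinearMap.id + rk BW w w)
      (LinearMap.id - rk BW w w) h1 h2 with hh
    have hsym : ∀ w' w'', BW (h w') (h w'') = BW w' w'' := by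
      intro w' w''
      have : h w' = w' + BW w' w • w := by simp [hh]
      have h2' : h w'' = w'' + BW w'' w • w := by simp [hh]
      rw [this, h2']
      simp only [map_add, map_smul, LinearMap.add_apply, LinearMap.smul_apply, smul_eq_mul]
      rw [hWalt w, hskew w w'']
      ring
    have hc := hcomm h hsym
    have hpt : ∀ z, T (h.toLinearMap.lTensor V z) = h.toLinearMap.lTensor V (T z) := by
      intro z
      have heq : ((TensorProduct.congr (LinearEquiv.refl F V) h) :
          V ⊗[F] W →ₗ[F] V ⊗[F] W) = h.toLinearMap.lTensor V := by
        apply TensorProduct.ext'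
        intro v y
        simp [LinearMap.lTensor_tmul]
      have := LinearEquiv.congr_fun hc z
      simp only [LinearEquiv.trans_apply] at this
      calc T (h.toLinearMap.lTensor V z)
          = T ((TensorProduct.congr (LinearEquiv.refl F V) h) z) := by rw [← heq]; rfl
        _ = (TensorProduct.congr (LinearEquiv.refl F V) h) (T z) := this.symm
        _ = h.toLinearMap.lTensor V (T z) := by rw [← heq]; rfl
    intro z
    have hhl : h.toLinearMap = LinearMap.id + rk BW w w := rfl
    have := hpt z
    rw [hhl, LinearMap.lTensor_add, LinearMap.lTensor_id] at this
    simp only [LinearMap.add_apply, LinearMap.id_apply, map_add] at this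
    exact add_left_cancel this
  -- rank-one operators with nonzero pairing
  have hrk1 : ∀ a b : W, BW a b ≠ 0 → P (rk BW a b) := by
    intro a b hab
    have heq : rk BW a b = (BW a b)⁻¹ • (rk BW b b ∘ₗ rk BW a a) := by
      apply LinearMap.ext
      intro x
      simp only [rk_apply, LinearMap.smul_apply, LinearMap.comp_apply, map_smul,
        smul_eq_mul, smul_smul]
      congr 1
      field_simp
    rw [heq]
    exact hPsmul _ _ (hPcomp _ _ (hPq b) (hPq a))
  -- all rank-one operators
  have hrk : ∀ a b : W, P (rk BW a b) := by
    intro a b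
    rcases eq_or_ne a 0 with rfl | ha
    · have : rk BW 0 b = 0 := by apply LinearMap.ext; intro x; simp
      rw [this]; exact hPzero
    rcases eq_or_ne b 0 with rfl | hb
    · have : rk BW a 0 = 0 := by apply LinearMap.ext; intro x; simp
      rw [this]; exact hPzero
    obtain ⟨b', hb'⟩ := hexR a ha
    have hb'ne : b' ≠ 0 := by rintro rfl; simp at hb'
    obtain ⟨c, hc1, hc2⟩ := exists_both_ne_zero (BW b') (BW.flip b)
      (hexR b' hb'ne) (hexL b hb)
    replace hc2 : BW c b ≠ 0 := hc2
    have heq : rk BW a b = (BW b' c)⁻¹ • (rk BW c b ∘ₗ rk BW a b') := by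
      apply LinearMap.ext
      intro x
      simp only [rk_apply, LinearMap.smul_apply, LinearMap.comp_apply, map_smul,
        smul_eq_mul, smul_smul]
      congr 1
      field_simp
    rw [heq]
    exact hPsmul _ _ (hPcomp _ _ (hrk1 _ _ hc2) (hrk1 _ _ hb'))
  -- all operators
  have hall : ∀ u : W →ₗ[F] W, P u := by
    intro u
    set e := Module.finBasis F W with he
    set a : Fin (Module.finrank F W) → W :=
      fun i => (BW.toDual hWnd).symm (-(e.coord i)) with ha
    have hax : ∀ i x, BW x (a i) = e.repr x i := by
      intro i x
      rw [hskew]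
      have : BW (a i) x = (-(e.coord i)) x := LinearMap.BilinForm.apply_toDual_symm_apply _ _
      rw [this]
      simp [Module.Basis.coord_apply]
    have hu : u = ∑ i, rk BW (a i) (u (e i)) := by
      apply LinearMap.ext
      intro x
      conv_lhs => rw [← e.sum_repr x]
      rw [map_sum, LinearMap.sum_apply]
      refine Finset.sum_congr rfl fun i _ => ?_
      rw [rk_apply, hax, map_smul]
    rw [hu]
    exact Finset.sum_induction _ P hPadd hPzero (fun i _ => hrk _ _)
  -- now construct A₀
  obtain ⟨w0, hw0⟩ := exists_ne (0 : W)
  obtain ⟨x0, hx0⟩ := hexR w0 hw0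
  set f : W →ₗ[F] F := (BW w0 x0)⁻¹ • (BW.flip x0) with hf
  have hfw0 : f w0 = 1 := by
    simp only [hf, LinearMap.smul_apply, LinearMap.flip_apply, smul_eq_mul]
    exact inv_mul_cancel₀ hx0
  set π : V ⊗[F] W →ₗ[F] V :=
    (TensorProduct.rid F V).toLinearMap ∘ₗ LinearMap.lTensor V f with hπ
  have hπtmul : ∀ (v : V) (y : W), π (v ⊗ₜ[F] y) = f y • v := by
    intro v y
    simp [hπ]
  set A₀ : V →ₗ[F] V := π ∘ₗ T.toLinearMap ∘ₗ ((TensorProduct.mk F V W).flip w0) with hA₀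
  have hA₀v : ∀ v : V, A₀ v = π (T (v ⊗ₜ[F] w0)) := fun v => rfl
  -- `T (v ⊗ w0) = A₀ v ⊗ w0`
  have hkey0 : ∀ v : V, T (v ⊗ₜ[F] w0) = (A₀ v) ⊗ₜ[F] w0 := by
    intro v
    set u0 : W →ₗ[F] W := f.smulRight w0 with hu0
    have hu0l : ∀ z, LinearMap.lTensor V u0 z = (π z) ⊗ₜ[F] w0 := by
      intro z
      have : LinearMap.lTensor V u0 = ((TensorProduct.mk F V W).flip w0) ∘ₗ π := by
        apply TensorProduct.ext'
        intro v' y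
        simp [hu0, hπtmul, TensorProduct.smul_tmul, TensorProduct.tmul_smul]
      rw [this]
      rfl
    have h0 : LinearMap.lTensor V u0 (v ⊗ₜ[F] w0) = v ⊗ₜ[F] w0 := by
      rw [hu0l, hπtmul, hfw0, one_smul]
    calc T (v ⊗ₜ[F] w0) = T (LinearMap.lTensor V u0 (v ⊗ₜ[F] w0)) := by rw [h0]
      _ = LinearMap.lTensor V u0 (T (v ⊗ₜ[F] w0)) := hall u0 _
      _ = (π (T (v ⊗ₜ[F] w0))) ⊗ₜ[F] w0 := hu0l _
      _ = (A₀ v) ⊗ₜ[F] w0 := by rw [hA₀v]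
  refine ⟨A₀, fun v w => ?_⟩
  set uw : W →ₗ[F] W := f.smulRight w with huw
  have huww0 : uw w0 = w := by simp [huw, hfw0]
  calc T (v ⊗ₜ[F] w) = T (LinearMap.lTensor V uw (v ⊗ₜ[F] w0)) := by
        rw [LinearMap.lTensor_tmul, huww0]
    _ = LinearMap.lTensor V uw (T (v ⊗ₜ[F] w0)) := hall uw _
    _ = LinearMap.lTensor V uw ((A₀ v) ⊗ₜ[F] w0) := by rw [hkey0]
    _ = (A₀ v) ⊗ₜ[F] w := by rw [LinearMap.lTensor_tmul, huww0]

private lemma commutant_aux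
    (BW : LinearMap.BilinForm F W) (hWalt : BW.IsAlt) (hWnd : BW.Nondegenerate)
    (T : (V ⊗[F] W) ≃ₗ[F] (V ⊗[F] W))
    (hcomm : ∀ h : W ≃ₗ[F] W, (∀ w w', BW (h w) (h w') = BW w w') →
      T.trans (TensorProduct.congr (LinearEquiv.refl F V) h) =
        (TensorProduct.congr (LinearEquiv.refl F V) h).trans T) :
    ∃ A : V ≃ₗ[F] V, T = TensorProduct.congr A (LinearEquiv.refl F W) := by
  obtain ⟨A₀, hA₀⟩ := commutant_aux₀ BW hWalt hWnd T hcomm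
  have hcomm' : ∀ h : W ≃ₗ[F] W, (∀ w w', BW (h w) (h w') = BW w w') →
      T.symm.trans (TensorProduct.congr (LinearEquiv.refl F V) h) =
        (TensorProduct.congr (LinearEquiv.refl F V) h).trans T.symm := by
    intro h hsym
    apply LinearEquiv.toLinearMap_injective
    apply LinearMap.ext
    intro z
    have := LinearEquiv.congr_fun (hcomm h hsym) (T.symm z)
    simp only [LinearEquiv.trans_apply, LinearEquiv.apply_symm_apply] at this
    simp only [LinearEquiv.coe_coe, LinearEquiv.trans_apply]
    rw [this, LinearEquiv.symm_apply_apply]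
  obtain ⟨A₁, hA₁⟩ := commutant_aux₀ BW hWalt hWnd T.symm hcomm'
  obtain ⟨w0, hw0⟩ := exists_ne (0 : W)
  -- injectivity of `v ↦ v ⊗ w0`
  have hinj : ∀ v v' : V, v ⊗ₜ[F] w0 = v' ⊗ₜ[F] w0 → v = v' := by
    intro v v' hvv
    have hskew : ∀ x y : W, BW x y = -BW y x := fun x y => (hWalt.neg_eq y x).symm
    have hexR : ∃ y, BW w0 y ≠ 0 := by
      by_contra h
      push_neg at h
      exact hw0 (hWnd.1 w0 h)
    obtain ⟨x0, hx0⟩ := hexR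
    set f : W →ₗ[F] F := (BW w0 x0)⁻¹ • (BW.flip x0) with hf
    have hfw0 : f w0 = 1 := by
      simp only [hf, LinearMap.smul_apply, LinearMap.flip_apply, smul_eq_mul]
      exact inv_mul_cancel₀ hx0
    set π : V ⊗[F] W →ₗ[F] V :=
      (TensorProduct.rid F V).toLinearMap ∘ₗ LinearMap.lTensor V f with hπ
    have hπtmul : ∀ (v'' : V), π (v'' ⊗ₜ[F] w0) = v'' := by
      intro v''
      simp [hπ, hfw0]
    rw [← hπtmul v, ← hπtmul v', hvv]
  have h1 : A₀ ∘ₗ A₁ = LinearMap.id := by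
    apply LinearMap.ext
    intro v
    apply hinj
    calc (A₀ (A₁ v)) ⊗ₜ[F] w0 = T ((A₁ v) ⊗ₜ[F] w0) := (hA₀ _ _).symm
      _ = T (T.symm (v ⊗ₜ[F] w0)) := by rw [← hA₁]
      _ = v ⊗ₜ[F] w0 := T.apply_symm_apply _
  have h2 : A₁ ∘ₗ A₀ = LinearMap.id := by
    apply LinearMap.ext
    intro v
    apply hinj
    calc (A₁ (A₀ v)) ⊗ₜ[F] w0 = T.symm ((A₀ v) ⊗ₜ[F] w0) := (hA₁ _ _).symm
      _ = T.symm (T (v ⊗ₜ[F] w0)) := by rw [← hA₀]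
      _ = v ⊗ₜ[F] w0 := T.symm_apply_apply _
  refine ⟨LinearEquiv.ofLinear A₀ A₁ h1 h2, ?_⟩
  apply LinearEquiv.toLinearMap_injective
  apply TensorProduct.ext'
  intro v w
  simpa using hA₀ v w

end Aux

/-- In the dual pair `O(V) × Sp(W) ⊆ Sp(V ⊗ W)`: the image of `O(V)` (acting by `g ⊗ 1`)
centralizes the image of `Sp(W)` (acting by `1 ⊗ h`); conversely, any element of
`Sp(V ⊗ W)` commuting with all `1 ⊗ h`, `h ∈ Sp(W)`, lies in the image of `GL(V) ⊗ 1`. -/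
theorem dual_pair_commutant
    (F : Type*) [Field F] (hchar : (2 : F) ≠ 0)
    (V W : Type*) [AddCommGroup V] [Module F V] [AddCommGroup W] [Module F W]
    [FiniteDimensional F V] [FiniteDimensional F W] [Nontrivial W]
    (BV : LinearMap.BilinForm F V) (hVsymm : BV.IsSymm) (hVnd : BV.Nondegenerate)
    (BW : LinearMap.BilinForm F W) (hWalt : BW.IsAlt) (hWnd : BW.Nondegenerate)
    (B : LinearMap.BilinForm F (V ⊗[F] W))
    (hB : ∀ (v₁ : V) (w₁ : W) (v₂ : V) (w₂ : W),
      B (v₁ ⊗ₜ[F] w₁) (v₂ ⊗ₜ[F] w₂) = BV v₁ v₂ * BW w₁ w₂) :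
    -- the images of `O(V)` and `Sp(W)` commute elementwise
    (∀ (g : V ≃ₗ[F] V) (h : W ≃ₗ[F] W),
      (∀ v v', BV (g v) (g v') = BV v v') → (∀ w w', BW (h w) (h w') = BW w w') →
      (TensorProduct.congr g (LinearEquiv.refl F W)).trans
          (TensorProduct.congr (LinearEquiv.refl F V) h) =
        (TensorProduct.congr (LinearEquiv.refl F V) h).trans
          (TensorProduct.congr g (LinearEquiv.refl F W))) ∧
    -- any element of `Sp(V ⊗ W)` centralizing `1 ⊗ Sp(W)` is of the form `A ⊗ 1`
    (∀ T : (V ⊗[F] W) ≃ₗ[F] (V ⊗[F] W),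
      (∀ x y, B (T x) (T y) = B x y) →
      (∀ h : W ≃ₗ[F] W, (∀ w w', BW (h w) (h w') = BW w w') →
        T.trans (TensorProduct.congr (LinearEquiv.refl F V) h) =
          (TensorProduct.congr (LinearEquiv.refl F V) h).trans T) →
      ∃ A : V ≃ₗ[F] V, T = TensorProduct.congr A (LinearEquiv.refl F W)) := by
  constructor
  · intro g h _ _
    apply LinearEquiv.toLinearMap_injective
    apply TensorProduct.ext'
    intro v w
    simp
  · intro T _ hcomm
    exact commutant_aux BW hWalt hWnd T hcomm
end

section
/- (Seesaw identity.) Let $(G, H)$ and $(G', H')$ be two pairs of commuting subgroups of a group $E$, with $G \subseteq G'$ and $H' \subseteq H$, and let $\Omega$ be a representation of $E$. For finite-dimensional irreducible representations $\pi$ of $G$ and $\sigma$ of $H'$, there are natural isomorphisms $\mathrm{Hom}_{H'}(\Theta_{G}(\pi), \sigma) \cong \mathrm{Hom}_{G\times H'}(\Omega, \pi\otimes\sigma) \cong \mathrm{Hom}_{G}(\Theta_{H'}(\sigma), \pi)$, where $\Theta_G(\pi) = (\Omega\otimes\pi^{\vee})_G$ as an $H$-representation (restricted to $H'$) and $\Theta_{H'}(\sigma)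 = (\Omega\otimes\sigma^{\vee})_{H'}$ as a $G'$-representation (restricted to $G$). -/
open TensorProduct

/-- The space of intertwining operators (equivariant linear maps) between two
representations, as a submodule of the space of linear maps. -/
def intertwiners {k : Type*} [Field k] {M : Type*} [Monoid M] {V W : Type*}
    [AddCommGroup V] [Module k V] [AddCommGroup W] [Module k W]
    (ρV : Representation k M V) (ρW : Representation k M W) :
    Submodule k (V →ₗ[k] W) where
  carrier := {f | ∀ m : M, f ∘ₗ ρV m = ρW m ∘ₗ f}
  add_mem' := by
    intro a b ha hb m
    rw [LinearMap.add_comp, LinearMap.comp_add, ha m, hb m]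
  zero_mem' := by
    intro m
    rw [LinearMap.zero_comp, LinearMap.comp_zero]
  smul_mem' := by
    intro c f hf m
    rw [LinearMap.smul_comp, LinearMap.comp_smul, hf m]


open Module

lemma mem_intertwiners {k : Type*} [Field k] {M : Type*} [Monoid M] {V W : Type*}
    [AddCommGroup V] [Module k V] [AddCommGroup W] [Module k W]
    (ρV : Representation k M V) (ρW : Representation k M W) (f : V →ₗ[k] W) :
    f ∈ intertwiners ρV ρW ↔ ∀ m : M, f ∘ₗ ρV m = ρW m ∘ₗ f := Iff.rfl

lemma trivial_eq_id {k : Type*} [Field k] {G : Type*} [Monoid G] {V : Type*}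
    [AddCommGroup V] [Module k V] (g : G) :
    (Representation.trivial k (G := G) (V := V)) g = LinearMap.id := by
  ext v; exact Representation.trivial_apply (k := k) (G := G) (V := V) g v

noncomputable def eAB (k : Type) [Field k] (VA VB : Type) [AddCommGroup VA] [Module k VA]
    [FiniteDimensional k VA] [AddCommGroup VB] [Module k VB] :
    (VA ⊗[k] VB) ≃ₗ[k] ((VA →ₗ[k] k) →ₗ[k] VB) :=
  (TensorProduct.congr (Module.evalEquiv k VA) (LinearEquiv.refl k VB)).trans
    (dualTensorHomEquiv k (Module.Dual k VA) VB)

variable {k : Type} [Field k]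
variable {VA : Type} [AddCommGroup VA] [Module k VA] [FiniteDimensional k VA]
variable {VB : Type} [AddCommGroup VB] [Module k VB]

lemma eAB_tmul (a : VA) (b : VB) (l : VA →ₗ[k] k) : eAB k VA VB (a ⊗ₜ b) l = l a • b := by
  simp [eAB]

lemma eAB_precomp (u : VA →ₗ[k] VA) (x : VA ⊗[k] VB) (l : VA →ₗ[k] k) :
    eAB k VA VB x (l ∘ₗ u) = eAB k VA VB (TensorProduct.map u LinearMap.id x) l := by
  induction x using TensorProduct.induction_on with
  | zero => simp
  | tmul a b => simp [eAB_tmul]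
  | add x y hx hy => simp [map_add, hx, hy]

lemma eAB_postcomp (v : VB →ₗ[k] VB) (x : VA ⊗[k] VB) (l : VA →ₗ[k] k) :
    v (eAB k VA VB x l) = eAB k VA VB (TensorProduct.map LinearMap.id v x) l := by
  induction x using TensorProduct.induction_on with
  | zero => simp
  | tmul a b => simp [eAB_tmul]
  | add x y hx hy => simp [map_add, hx, hy]

lemma eAB_inj {x y : VA ⊗[k] VB} (h : ∀ l, eAB k VA VB x l = eAB k VA VB y l) : x = y :=
  (eAB k VA VB).injective (LinearMap.ext h)

noncomputable def homEquiv (k Om VA VB : Type) [Field k] [AddCommGroup Om] [Module k Om]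
    [AddCommGroup VA] [Module k VA] [FiniteDimensional k VA] [AddCommGroup VB] [Module k VB] :
    (Om →ₗ[k] VA ⊗[k] VB) ≃ₗ[k] ((Om ⊗[k] (VA →ₗ[k] k)) →ₗ[k] VB) :=
  (LinearEquiv.arrowCongr (LinearEquiv.refl k Om) (eAB k VA VB)).trans
    (TensorProduct.lift.equiv (RingHom.id k) Om (VA →ₗ[k] k) VB)

lemma homEquiv_apply {Om : Type} [AddCommGroup Om] [Module k Om]
    (T : Om →ₗ[k] VA ⊗[k] VB) (w : Om) (l : VA →ₗ[k] k) :
    homEquiv k Om VA VB T (w ⊗ₜ l) = eAB k VA VB (T w) l := by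
  simp [homEquiv]

/-- restrict an equiv to submodules characterized by an iff -/
noncomputable def equivOfIff {V W : Type} [AddCommGroup V] [Module k V]
    [AddCommGroup W] [Module k W] (e : V ≃ₗ[k] W) (p : Submodule k V) (q : Submodule k W)
    (h : ∀ x, x ∈ p ↔ e x ∈ q) : ↥p ≃ₗ[k] ↥q :=
  LinearEquiv.ofBijective (e.toLinearMap.restrict (fun x hx => (h x).1 hx))
    ⟨fun a b hab => Subtype.ext (e.injective (Subtype.ext_iff.1 hab)),
     fun y => ⟨⟨e.symm y, (h _).2 (by simpa using y.2)⟩, Subtype.ext (by simp)⟩⟩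

lemma seesaw_aux {k : Type} [Field k] {M N : Type} [Group M] [Group N]
    {Om : Type} [AddCommGroup Om] [Module k Om]
    (ρM : Representation k M Om) (ρN : Representation k N Om)
    {VA : Type} [AddCommGroup VA] [Module k VA] [FiniteDimensional k VA]
    (ρA : Representation k M VA)
    {VB : Type} [AddCommGroup VB] [Module k VB]
    (ρB : Representation k N VB)
    (J : Submodule k (Om ⊗[k] (VA →ₗ[k] k)))
    (hJ : J = Submodule.span k {x | ∃ (m : M) (v : Om ⊗[k] (VA →ₗ[k] k)),
      Representation.tprod ρM ρA.dual m v - v = x})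
    (ρTh : Representation k N ((Om ⊗[k] (VA →ₗ[k] k)) ⧸ J))
    (hTh : ∀ (n : N) (x : Om ⊗[k] (VA →ₗ[k] k)),
      ρTh n (Submodule.Quotient.mk x) =
        (Submodule.Quotient.mk (TensorProduct.map (ρN n) LinearMap.id x) :
          (Om ⊗[k] (VA →ₗ[k] k)) ⧸ J)) :
    Nonempty (↥(intertwiners ρTh ρB) ≃ₗ[k]
      ↥(intertwiners ρM (Representation.tprod ρA (Representation.trivial k (G := M) (V := VB))) ⊓
        intertwiners ρN (Representation.tprod (Representation.trivial k (G := N) (V := VA)) ρB))) := by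
  set Φ := homEquiv k Om VA VB with hΦ
  -- key algebraic facts
  have hAinv : ∀ m : M, (ρA m⁻¹) ∘ₗ (ρA m) = LinearMap.id := by
    intro m
    have : ρA m⁻¹ * ρA m = 1 := by rw [← map_mul, inv_mul_cancel, map_one]
    exact this
  have hAinv' : ∀ m : M, (ρA m) ∘ₗ (ρA m⁻¹) = LinearMap.id := by
    intro m
    have : ρA m * ρA m⁻¹ = 1 := by rw [← map_mul, mul_inv_cancel, map_one]
    exact this
  have keyA : ∀ T : Om →ₗ[k] VA ⊗[k] VB,
      (∀ m : M, (Φ T) ∘ₗ TensorProduct.map (ρM m) (ρA.dual m) = Φ T) ↔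
      (∀ m : M, T ∘ₗ ρM m = TensorProduct.map (ρA m) LinearMap.id ∘ₗ T) := by
    intro T
    constructor
    · intro h m
      apply LinearMap.ext; intro w
      apply eAB_inj; intro l
      have h1 := congrArg (fun ψ => ψ (w ⊗ₜ (l ∘ₗ ρA m))) (h m)
      simp only [LinearMap.comp_apply, TensorProduct.map_tmul] at h1 ⊢
      rw [Representation.dual_apply] at h1
      have h2 : Dual.transpose (R := k) (ρA m⁻¹) (l ∘ₗ ρA m) = l := by
        simp only [Dual.transpose_apply]
        rw [LinearMap.comp_assoc, hAinv', LinearMap.comp_id]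
      rw [h2, homEquiv_apply, homEquiv_apply] at h1
      rw [h1, eAB_precomp]
    · intro h m
      apply TensorProduct.ext'; intro w l
      simp only [LinearMap.comp_apply, TensorProduct.map_tmul, Representation.dual_apply,
        Dual.transpose_apply]
      rw [homEquiv_apply, homEquiv_apply]
      have h1 : T (ρM m w) = TensorProduct.map (ρA m) LinearMap.id (T w) :=
        congrArg (fun ψ => ψ w) (h m)
      rw [h1, eAB_precomp, ← LinearMap.comp_apply, ← TensorProduct.map_comp, hAinv,
        LinearMap.id_comp, TensorProduct.map_id, LinearMap.id_apply]
  have keyB : ∀ T : Om →ₗ[k] VA ⊗[k] VB,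
      (∀ n : N, (Φ T) ∘ₗ TensorProduct.map (ρN n) LinearMap.id = ρB n ∘ₗ (Φ T)) ↔
      (∀ n : N, T ∘ₗ ρN n = TensorProduct.map LinearMap.id (ρB n) ∘ₗ T) := by
    intro T
    constructor
    · intro h n
      apply LinearMap.ext; intro w
      apply eAB_inj; intro l
      have h1 := congrArg (fun ψ => ψ (w ⊗ₜ l)) (h n)
      simp only [LinearMap.comp_apply, TensorProduct.map_tmul, LinearMap.id_apply] at h1 ⊢
      rw [homEquiv_apply, homEquiv_apply] at h1
      rw [h1, eAB_postcomp]
    · intro h n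
      apply TensorProduct.ext'; intro w l
      simp only [LinearMap.comp_apply, TensorProduct.map_tmul, LinearMap.id_apply]
      rw [homEquiv_apply, homEquiv_apply]
      have h1 : T (ρN n w) = TensorProduct.map LinearMap.id (ρB n) (T w) :=
        congrArg (fun ψ => ψ w) (h n)
      rw [h1, ← eAB_postcomp]
  have hcomm : ∀ n : N, (ρTh n) ∘ₗ J.mkQ = J.mkQ ∘ₗ TensorProduct.map (ρN n) LinearMap.id := by
    intro n
    apply LinearMap.ext; intro x
    simp only [LinearMap.comp_apply, Submodule.mkQ_apply]
    exact hTh n x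
  have keyQ : ∀ f : ((Om ⊗[k] (VA →ₗ[k] k)) ⧸ J) →ₗ[k] VB,
      f ∈ intertwiners ρTh ρB ↔
      ∀ n : N, (f ∘ₗ J.mkQ) ∘ₗ TensorProduct.map (ρN n) LinearMap.id = ρB n ∘ₗ (f ∘ₗ J.mkQ) := by
    intro f
    rw [mem_intertwiners]
    constructor
    · intro h n
      rw [LinearMap.comp_assoc, ← hcomm n, ← LinearMap.comp_assoc, h n, LinearMap.comp_assoc]
    · intro h n
      apply Submodule.linearMap_qext
      rw [LinearMap.comp_assoc, hcomm n, ← LinearMap.comp_assoc, h n, LinearMap.comp_assoc]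
  -- the linear map
  set L : (((Om ⊗[k] (VA →ₗ[k] k)) ⧸ J) →ₗ[k] VB) →ₗ[k] (Om →ₗ[k] VA ⊗[k] VB) :=
    Φ.symm.toLinearMap ∘ₗ LinearMap.lcomp k VB J.mkQ with hL
  have hLf : ∀ f, L f = Φ.symm (f ∘ₗ J.mkQ) := fun f => rfl
  set Q := intertwiners ρM (Representation.tprod ρA (Representation.trivial k (G := M) (V := VB))) ⊓
        intertwiners ρN (Representation.tprod (Representation.trivial k (G := N) (V := VA)) ρB)
    with hQ
  have memQ : ∀ T : Om →ₗ[k] VA ⊗[k] VB, T ∈ Q ↔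
      ((∀ m : M, T ∘ₗ ρM m = TensorProduct.map (ρA m) LinearMap.id ∘ₗ T) ∧
       (∀ n : N, T ∘ₗ ρN n = TensorProduct.map LinearMap.id (ρB n) ∘ₗ T)) := by
    intro T
    rw [hQ, Submodule.mem_inf, mem_intertwiners, mem_intertwiners]
    simp only [Representation.tprod_apply, trivial_eq_id]
  have hmem : ∀ f ∈ intertwiners ρTh ρB, L f ∈ Q := by
    intro f hf
    rw [hLf, memQ]
    have hΦT : Φ (Φ.symm (f ∘ₗ J.mkQ)) = f ∘ₗ J.mkQ := Φ.apply_symm_apply _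
    constructor
    · rw [← keyA]
      intro m
      rw [hΦT]
      apply LinearMap.ext; intro v
      simp only [LinearMap.comp_apply, Submodule.mkQ_apply]
      congr 1
      rw [Submodule.Quotient.eq]
      rw [hJ]
      apply Submodule.subset_span
      exact ⟨m, v, by rw [Representation.tprod_apply]⟩
    · rw [← keyB]
      intro n
      rw [hΦT]
      exact (keyQ f).1 hf n
  have hinjL : Function.Injective L := by
    intro f g hfg
    rw [hLf, hLf] at hfg
    have := Φ.symm.injective hfg
    exact Submodule.linearMap_qext J this
  have hsurj : ∀ T ∈ Q, ∃ f ∈ intertwiners ρTh ρB, L f = T := by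
    intro T hT
    rw [memQ] at hT
    obtain ⟨h1, h2⟩ := hT
    have hA := (keyA T).2 h1
    have hker : J ≤ LinearMap.ker (Φ T) := by
      rw [hJ, Submodule.span_le]
      rintro x ⟨m, v, rfl⟩
      rw [SetLike.mem_coe, LinearMap.mem_ker, map_sub, Representation.tprod_apply]
      have := congrArg (fun ψ => ψ v) (hA m)
      simp only [LinearMap.comp_apply] at this
      rw [this, sub_self]
    refine ⟨J.liftQ (Φ T) hker, ?_, ?_⟩
    · rw [keyQ]
      have hlq : (J.liftQ (Φ T) hker) ∘ₗ J.mkQ = Φ T := J.liftQ_mkQ (Φ T) hker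
      rw [hlq]
      exact (keyB T).2 h2
    · rw [hLf, J.liftQ_mkQ, Φ.symm_apply_apply]
  refine ⟨LinearEquiv.ofBijective (L.restrict hmem) ⟨?_, ?_⟩⟩
  · intro a b hab
    exact Subtype.ext (hinjL (Subtype.ext_iff.1 hab))
  · rintro ⟨T, hT⟩
    obtain ⟨f, hfP, hfT⟩ := hsurj T hT
    exact ⟨⟨f, hfP⟩, Subtype.ext hfT⟩

lemma comm_map_lid (u : VA →ₗ[k] VA) (x : VA ⊗[k] VB) :
    TensorProduct.comm k VA VB (TensorProduct.map u LinearMap.id x) =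
      TensorProduct.map LinearMap.id u (TensorProduct.comm k VA VB x) := by
  induction x using TensorProduct.induction_on with
  | zero => simp
  | tmul a b => simp
  | add x y hx hy => simp [map_add, hx, hy]

lemma comm_map_idr (v : VB →ₗ[k] VB) (x : VA ⊗[k] VB) :
    TensorProduct.comm k VA VB (TensorProduct.map LinearMap.id v x) =
      TensorProduct.map v LinearMap.id (TensorProduct.comm k VA VB x) := by
  induction x using TensorProduct.induction_on with
  | zero => simp
  | tmul a b => simp
  | add x y hx hy => simp [map_add, hx, hy]

lemma swap_left {Om : Type} [AddCommGroup Om] [Module k Om] {M : Type} [Monoid M]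
    (ρ : Representation k M Om) (ρA : Representation k M VA)
    (T : Om →ₗ[k] VA ⊗[k] VB) (m : M) :
    T ∘ₗ ρ m = TensorProduct.map (ρA m) LinearMap.id ∘ₗ T ↔
    ((TensorProduct.comm k VA VB).toLinearMap ∘ₗ T) ∘ₗ ρ m =
      TensorProduct.map LinearMap.id (ρA m) ∘ₗ ((TensorProduct.comm k VA VB).toLinearMap ∘ₗ T) := by
  constructor
  · intro h
    apply LinearMap.ext; intro w
    have h1 : T (ρ m w) = TensorProduct.map (ρA m) LinearMap.id (T w) :=
      congrArg (fun ψ => ψ w) h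
    simp only [LinearMap.comp_apply, LinearEquiv.coe_coe]
    rw [h1, comm_map_lid]
  · intro h
    apply LinearMap.ext; intro w
    have h1 := congrArg (fun ψ => ψ w) h
    simp only [LinearMap.comp_apply, LinearEquiv.coe_coe] at h1
    apply (TensorProduct.comm k VA VB).injective
    simp only [LinearMap.comp_apply]
    rw [h1, comm_map_lid]

lemma swap_right {Om : Type} [AddCommGroup Om] [Module k Om] {N : Type} [Monoid N]
    (ρ : Representation k N Om) (ρB : Representation k N VB)
    (T : Om →ₗ[k] VA ⊗[k] VB) (n : N) :
    T ∘ₗ ρ n = TensorProduct.map LinearMap.id (ρB n) ∘ₗ T ↔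
    ((TensorProduct.comm k VA VB).toLinearMap ∘ₗ T) ∘ₗ ρ n =
      TensorProduct.map (ρB n) LinearMap.id ∘ₗ ((TensorProduct.comm k VA VB).toLinearMap ∘ₗ T) := by
  constructor
  · intro h
    apply LinearMap.ext; intro w
    have h1 : T (ρ n w) = TensorProduct.map LinearMap.id (ρB n) (T w) :=
      congrArg (fun ψ => ψ w) h
    simp only [LinearMap.comp_apply, LinearEquiv.coe_coe]
    rw [h1, comm_map_idr]
  · intro h
    apply LinearMap.ext; intro w
    have h1 := congrArg (fun ψ => ψ w) h
    simp only [LinearMap.comp_apply, LinearEquiv.coe_coe] at h1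
    apply (TensorProduct.comm k VA VB).injective
    simp only [LinearMap.comp_apply]
    rw [h1, comm_map_idr]

/-- The seesaw identity: for a seesaw pair of dual pairs `(G, H)`, `(G', H')` in `E` with
`G ⊆ G'`, `H' ⊆ H`, each pair commuting elementwise, a representation `Ω` of `E`, and
finite-dimensional irreducible representations `π` of `G`, `σ` of `H'`, there are natural
isomorphisms
`Hom_{H'}(Θ_G(π), σ) ≅ Hom_{G×H'}(Ω, π ⊗ σ) ≅ Hom_G(Θ_{H'}(σ), π)`,
where `Θ_G(π) = (Ω ⊗ π^∨)_G` with its `H`-action restricted to `H'`, and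
`Θ_{H'}(σ) = (Ω ⊗ σ^∨)_{H'}` with its `G'`-action restricted to `G`. -/
theorem seesaw_identity
    {k : Type} [Field k] {E : Type} [Group E]
    (G G' H H' : Subgroup E) (hGG' : G ≤ G') (hH'H : H' ≤ H)
    (hGH : ∀ g ∈ G, ∀ h ∈ H, Commute g h)
    (hG'H' : ∀ g ∈ G', ∀ h ∈ H', Commute g h)
    {Om : Type} [AddCommGroup Om] [Module k Om] (ρOm : Representation k E Om)
    {Vpi : Type} [AddCommGroup Vpi] [Module k Vpi] [FiniteDimensional k Vpi]
    (ρpi : Representation k ↥G Vpi)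
    (hpi_nontriv : Nontrivial Vpi)
    (hpi_irr : ∀ p : Submodule k Vpi, (∀ g : ↥G, p.map (ρpi g) ≤ p) → p = ⊥ ∨ p = ⊤)
    {Vsig : Type} [AddCommGroup Vsig] [Module k Vsig] [FiniteDimensional k Vsig]
    (ρsig : Representation k ↥H' Vsig)
    (hsig_nontriv : Nontrivial Vsig)
    (hsig_irr : ∀ p : Submodule k Vsig, (∀ h : ↥H', p.map (ρsig h) ≤ p) → p = ⊥ ∨ p = ⊤)
    -- `Θ_G(π) = (Ω ⊗ π^∨)_G`, with the `H`-action on it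
    (JG : Submodule k (Om ⊗[k] (Vpi →ₗ[k] k)))
    (hJG : JG = Submodule.span k {x | ∃ (g : ↥G) (v : Om ⊗[k] (Vpi →ₗ[k] k)),
      Representation.tprod (ρOm.comp G.subtype) ρpi.dual g v - v = x})
    (ρThG : Representation k ↥H ((Om ⊗[k] (Vpi →ₗ[k] k)) ⧸ JG))
    (hThG : ∀ (h : ↥H) (x : Om ⊗[k] (Vpi →ₗ[k] k)),
      ρThG h (Submodule.Quotient.mk x) =
        (Submodule.Quotient.mk (TensorProduct.map (ρOm ↑h) LinearMap.id x) :
          (Om ⊗[k] (Vpi →ₗ[k] k)) ⧸ JG))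
    -- `Θ_{H'}(σ) = (Ω ⊗ σ^∨)_{H'}`, with the `G'`-action on it
    (JH : Submodule k (Om ⊗[k] (Vsig →ₗ[k] k)))
    (hJH : JH = Submodule.span k {x | ∃ (h : ↥H') (v : Om ⊗[k] (Vsig →ₗ[k] k)),
      Representation.tprod (ρOm.comp H'.subtype) ρsig.dual h v - v = x})
    (ρThH : Representation k ↥G' ((Om ⊗[k] (Vsig →ₗ[k] k)) ⧸ JH))
    (hThH : ∀ (g : ↥G') (x : Om ⊗[k] (Vsig →ₗ[k] k)),
      ρThH g (Submodule.Quotient.mk x) =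
        (Submodule.Quotient.mk (TensorProduct.map (ρOm ↑g) LinearMap.id x) :
          (Om ⊗[k] (Vsig →ₗ[k] k)) ⧸ JH)) :
    -- `Hom_{G×H'}(Ω, π ⊗ σ)`: equivariance for `G` (acting on the `π` factor) and
    -- for `H'` (acting on the `σ` factor)
    Nonempty (↥(intertwiners (ρThG.comp (Subgroup.inclusion hH'H)) ρsig) ≃ₗ[k]
      ↥(intertwiners (ρOm.comp G.subtype)
          (Representation.tprod ρpi (Representation.trivial k (G := ↥G) (V := Vsig))) ⊓
        intertwiners (ρOm.comp H'.subtype)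
          (Representation.tprod (Representation.trivial k (G := ↥H') (V := Vpi)) ρsig))) ∧
    Nonempty (↥(intertwiners (ρOm.comp G.subtype)
          (Representation.tprod ρpi (Representation.trivial k (G := ↥G) (V := Vsig))) ⊓
        intertwiners (ρOm.comp H'.subtype)
          (Representation.tprod (Representation.trivial k (G := ↥H') (V := Vpi)) ρsig)) ≃ₗ[k]
      ↥(intertwiners (ρThH.comp (Subgroup.inclusion hGG')) ρpi)) := by
  have hTh1 : ∀ (n : ↥H') (x : Om ⊗[k] (Vpi →ₗ[k] k)),
      (ρThG.comp (Subgroup.inclusion hH'H)) n (Submodule.Quotient.mk x) =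
        (Submodule.Quotient.mk (TensorProduct.map ((ρOm.comp H'.subtype) n) LinearMap.id x) :
          (Om ⊗[k] (Vpi →ₗ[k] k)) ⧸ JG) := by
    intro n x
    have h := hThG (Subgroup.inclusion hH'H n) x
    simpa [Subgroup.coe_inclusion] using h
  have hTh2 : ∀ (n : ↥G) (x : Om ⊗[k] (Vsig →ₗ[k] k)),
      (ρThH.comp (Subgroup.inclusion hGG')) n (Submodule.Quotient.mk x) =
        (Submodule.Quotient.mk (TensorProduct.map ((ρOm.comp G.subtype) n) LinearMap.id x) :
          (Om ⊗[k] (Vsig →ₗ[k] k)) ⧸ JH) := by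
    intro n x
    have h := hThH (Subgroup.inclusion hGG' n) x
    simpa [Subgroup.coe_inclusion] using h
  obtain ⟨e1⟩ := seesaw_aux (ρOm.comp G.subtype) (ρOm.comp H'.subtype) ρpi ρsig JG hJG
    (ρThG.comp (Subgroup.inclusion hH'H)) hTh1
  obtain ⟨e2⟩ := seesaw_aux (ρOm.comp H'.subtype) (ρOm.comp G.subtype) ρsig ρpi JH hJH
    (ρThH.comp (Subgroup.inclusion hGG')) hTh2
  refine ⟨⟨e1⟩, ⟨?_⟩⟩
  refine LinearEquiv.trans (equivOfIff
    (LinearEquiv.arrowCongr (LinearEquiv.refl k Om) (TensorProduct.comm k Vpi Vsig))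
    _ _ ?_) e2.symm
  intro T
  have he : (LinearEquiv.arrowCongr (LinearEquiv.refl k Om) (TensorProduct.comm k Vpi Vsig)) T =
      (TensorProduct.comm k Vpi Vsig).toLinearMap ∘ₗ T := by
    apply LinearMap.ext; intro w
    simp [LinearEquiv.arrowCongr_apply]
  rw [he, Submodule.mem_inf, Submodule.mem_inf, mem_intertwiners, mem_intertwiners,
    mem_intertwiners, mem_intertwiners]
  simp only [Representation.tprod_apply, trivial_eq_id]
  rw [and_comm]
  exact and_congr
    (forall_congr' fun n => swap_right (ρOm.comp H'.subtype) ρsig T n)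
    (forall_congr' fun m => swap_left (ρOm.comp G.subtype) ρpi T m)
end
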